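/- arXiv:2511.10078 — 2 statements merged into one kernel-verified Lean document; each statement's English description precedes it below -/
import Mathlib

section
/- Let b ≥ 2 be an integer and k = ⌊b/2⌋. Let α be any type, u : α × α → ℝ a symmetric function (u(x,y) = u(y,x) for all x, y), and z₁,…,z_b ∈ α. Then binom(b,2)⁻¹ Σ_{1≤i<j≤b} u(z_i, z_j) = (1/k)·(1/b!)·Σ_{π ∈ S_b} Σ_{s=1}^{k} u(z_{π(2s−1)}, z_{π(2s)}), where S_b denotes the set of all permutations of {1,…,b}. Moreover, for each unordered pair {i,j} ⊆ {1,…,b} with i ≠ j, the number of pairs (π, s) with π ∈ S_b and 1 ≤ s ≤ k such that {π(2s−1), π(2s)} = {i,j} equals 2k(b−2)!. -/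
/-!
Precomposing with a permutation that carries one pair of distinct points to another shows that
`∑ π, f (π a) (π b)` is the same for every pair `a ≠ b`. Summing it over all `n (n - 1)` such
pairs and exchanging the sums gives `n! • ∑_{x ≠ y} f x y`, so each ordered pair of distinct
points is hit by exactly `(n - 2)!` permutations. Both claims follow by applying this to each of
the `k` slots `(2s, 2s + 1)`: with `f = u ∘ z` for the average, and with the indicator of `{i, j}`
for the count.
-/

/-- Extension of a permutation of `Fin b` to `ℕ` (fixing indices `≥ b`). -/
def permExt {b : ℕ} (π : Equiv.Perm (Fin b)) (i : ℕ) : ℕ :=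
  if h : i < b then ((π ⟨i, h⟩ : Fin b) : ℕ) else i

open Finset Equiv
open scoped Nat

lemma Equiv.Perm.exists_apply_eq_and_apply_eq {α : Type*} [DecidableEq α] {a b x y : α}
    (hab : a ≠ b) (hxy : x ≠ y) :
    ∃ τ : Perm α, τ a = x ∧ τ b = y := by
  have hcx : swap a x b ≠ x := fun h =>
    hab ((swap a x).injective (h.trans (swap_apply_left a x).symm)).symm
  refine ⟨swap (swap a x b) y * swap a x, ?_, ?_⟩
  · rw [Perm.mul_apply, swap_apply_left, swap_apply_of_ne_of_ne hcx.symm hxy]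
  · rw [Perm.mul_apply, swap_apply_left]

section PermSum

variable {α M : Type*} [Fintype α] [DecidableEq α] [AddCommMonoid M]

lemma sum_perm_apply_apply_congr (f : α → α → M) {a b x y : α} (hab : a ≠ b)
    (hxy : x ≠ y) :
    ∑ π : Perm α, f (π a) (π b) = ∑ π : Perm α, f (π x) (π y) := by
  obtain ⟨τ, hτx, hτy⟩ := Perm.exists_apply_eq_and_apply_eq hxy hab
  rw [← Equiv.sum_comp (Equiv.mulRight τ) fun π => f (π x) (π y)]
  simp only [coe_mulRight, Perm.mul_apply, hτx, hτy]

lemma card_offDiag_nsmul_sum_perm_apply_apply (f : α → α → M) {a b : α} (hab : a ≠ b) :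
    #(univ : Finset α).offDiag • ∑ π : Perm α, f (π a) (π b)
      = (Fintype.card α)! • ∑ p ∈ (univ : Finset α).offDiag, f p.1 p.2 :=
  calc #(univ : Finset α).offDiag • ∑ π : Perm α, f (π a) (π b)
      = ∑ p ∈ (univ : Finset α).offDiag, ∑ π : Perm α, f (π p.1) (π p.2) := by
        rw [← sum_const]
        exact sum_congr rfl fun p hp => sum_perm_apply_apply_congr f hab (mem_offDiag.1 hp).2.2
    _ = ∑ π : Perm α, ∑ p ∈ (univ : Finset α).offDiag, f (π p.1) (π p.2) := sum_comm
    _ = ∑ π : Perm α, ∑ p ∈ (univ : Finset α).offDiag, f p.1 p.2 :=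
        sum_congr rfl fun π _ => sum_equiv (π.prodCongr π) (by simp) (by simp)
    _ = (Fintype.card α)! • ∑ p ∈ (univ : Finset α).offDiag, f p.1 p.2 := by
        rw [sum_const, card_univ, Fintype.card_perm]

lemma sum_perm_apply_apply [IsAddTorsionFree M] (f : α → α → M) {a b : α} (hab : a ≠ b) :
    ∑ π : Perm α, f (π a) (π b)
      = (Fintype.card α - 2)! • ∑ p ∈ (univ : Finset α).offDiag, f p.1 p.2 := by
  obtain ⟨n, hn⟩ : ∃ n, Fintype.card α = n + 2 :=
    ⟨Fintype.card α - 2, by have := Fintype.one_lt_card_iff.2 ⟨a, b, hab⟩; omega⟩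
  have hcard : #(univ : Finset α).offDiag = (n + 2) * (n + 1) := by
    rw [offDiag_card, card_univ, hn]
    exact Nat.sub_eq_of_eq_add (by ring)
  refine nsmul_right_injective (M := M) (n := (n + 2) * (n + 1)) (by positivity) ?_
  dsimp only
  rw [← hcard, card_offDiag_nsmul_sum_perm_apply_apply f hab, smul_smul, hcard, hn,
    Nat.add_sub_cancel, Nat.factorial_succ, Nat.factorial_succ, mul_assoc]

end PermSum

lemma sum_offDiag_eq_two_nsmul_sum_lt {α M : Type*} [LinearOrder α] [AddCommMonoid M]
    (s : Finset α) (w : α → α → M) (hw : ∀ x y, w x y = w y x) :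
    ∑ p ∈ s.offDiag, w p.1 p.2
      = 2 • ∑ i ∈ s, ∑ j ∈ s, if i < j then w i j else 0 := by
  have hsplit : ∀ i j, (if i ≠ j then w i j else 0)
      = (if i < j then w i j else 0) + (if j < i then w j i else 0) := by
    intro i j
    rcases lt_trichotomy i j with h | rfl | h
    · rw [if_pos h.ne, if_pos h, if_neg h.not_gt, add_zero]
    · simp
    · rw [if_pos h.ne', if_neg h.not_gt, if_pos h, zero_add, hw]
  have hoff : s.offDiag = {p ∈ s ×ˢ s | p.1 ≠ p.2} := by
    ext
    simp [and_assoc]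
  rw [hoff, sum_filter, sum_product]
  simp only [hsplit, sum_add_distrib]
  rw [sum_comm (s := s) (t := s) (f := fun i j => if j < i then w j i else 0), two_nsmul]

lemma card_offDiag_filter_pair_eq_two {α : Type*} [DecidableEq α] {s : Finset α} {i j : α}
    (hi : i ∈ s) (hj : j ∈ s) (hij : i ≠ j) :
    #{p ∈ s.offDiag | ({p.1, p.2} : Finset α) = {i, j}} = 2 := by
  have : {p ∈ s.offDiag | ({p.1, p.2} : Finset α) = {i, j}} = {(i, j), (j, i)} := by
    ext ⟨x, y⟩
    simp only [mem_filter, mem_offDiag, mem_insert, mem_singleton, Prod.mk.injEq,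
      ← coe_inj, coe_pair, Set.pair_eq_pair_iff]
    constructor
    · exact fun h => h.2
    · rintro (⟨rfl, rfl⟩ | ⟨rfl, rfl⟩) <;> simp_all [Ne.symm hij]
  rw [this, card_pair (by simp [hij])]

lemma permExt_of_lt {b : ℕ} (π : Perm (Fin b)) {i : ℕ} (h : i < b) :
    permExt π i = π ⟨i, h⟩ :=
  dif_pos h

section PermExt

variable {M : Type*} [AddCommMonoid M] [IsAddTorsionFree M] (f : ℕ → ℕ → M) {b : ℕ}

lemma sum_perm_permExt {i j : ℕ} (hi : i < b) (hj : j < b) (hij : i ≠ j) :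
    ∑ π : Perm (Fin b), f (permExt π i) (permExt π j)
      = (b - 2)! • ∑ p ∈ (range b).offDiag, f p.1 p.2 := by
  simp only [permExt_of_lt _ hi, permExt_of_lt _ hj]
  rw [sum_perm_apply_apply (fun x y : Fin b => f x y) (a := ⟨i, hi⟩) (b := ⟨j, hj⟩)
    (by simpa [Fin.ext_iff] using hij), Fintype.card_fin]
  congr 1
  refine sum_nbij (fun p => (p.1.val, p.2.val)) ?_ ?_ ?_ (fun _ _ => rfl)
  · simp [Fin.val_inj]
  · intro p _ q _ h
    simpa [Prod.ext_iff, Fin.ext_iff] using h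
  · rintro ⟨x, y⟩ h
    simp only [coe_offDiag, Set.mem_offDiag, coe_range, Set.mem_Iio] at h
    exact ⟨(⟨x, h.1⟩, ⟨y, h.2.1⟩), by simpa [Fin.ext_iff] using h.2.2, rfl⟩

lemma sum_perm_sum_range_permExt_pairs {k : ℕ} (hk : 2 * k ≤ b) :
    ∑ π : Perm (Fin b), ∑ s ∈ range k, f (permExt π (2 * s)) (permExt π (2 * s + 1))
      = k • (b - 2)! • ∑ p ∈ (range b).offDiag, f p.1 p.2 := by
  have hslot : ∀ s ∈ range k, 2 * s < b ∧ 2 * s + 1 < b := fun s hs => by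
    rw [mem_range] at hs
    omega
  rw [sum_comm, sum_congr rfl fun s hs =>
    sum_perm_permExt f (hslot s hs).1 (hslot s hs).2 (by omega), sum_const, card_range]

end PermExt

/-- For a symmetric function `u` and points `z_0,…,z_{b−1}` (zero-based),
with `k = ⌊b/2⌋`:
`binom(b,2)⁻¹ Σ_{i<j} u(z_i,z_j) = (1/k)·(1/b!)·Σ_{π ∈ S_b} Σ_{s<k} u(z_{π(2s)}, z_{π(2s+1)})`,
and for each unordered pair `{i,j}` with `i ≠ j`, the number of pairs `(π, s)` with
`{π(2s), π(2s+1)} = {i,j}` equals `2k(b−2)!`. -/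
theorem statement16 {α : Type*} (b : ℕ) (hb : 2 ≤ b) (k : ℕ) (hk : k = b / 2)
    (u : α → α → ℝ) (hsymm : ∀ x y, u x y = u y x) (z : ℕ → α) :
    (((b.choose 2 : ℕ) : ℝ)⁻¹ *
        ∑ i ∈ Finset.range b, ∑ j ∈ Finset.range b,
          (if i < j then u (z i) (z j) else 0)
      = (1 / (k : ℝ)) * (1 / (b.factorial : ℝ)) *
          ∑ π : Equiv.Perm (Fin b), ∑ s ∈ Finset.range k,
            u (z (permExt π (2 * s))) (z (permExt π (2 * s + 1)))) ∧
    (∀ i j : ℕ, i < b → j < b → i ≠ j →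
      (((Finset.univ : Finset (Equiv.Perm (Fin b))) ×ˢ Finset.range k).filter
          (fun p : Equiv.Perm (Fin b) × ℕ =>
            ({permExt p.1 (2 * p.2), permExt p.1 (2 * p.2 + 1)} : Finset ℕ)
              = ({i, j} : Finset ℕ))).card
        = 2 * k * (b - 2).factorial) := by
  have hk2 : 2 * k ≤ b := by omega
  constructor
  · have hchoose : ((b.choose 2 : ℕ) : ℝ) * 2 * (b - 2)! = b ! := by
      exact_mod_cast Nat.choose_mul_factorial_mul_factorial hb
    have hk0 : (k : ℝ) ≠ 0 := by
      rw [hk]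
      exact_mod_cast (Nat.div_pos hb two_pos).ne'
    rw [sum_perm_sum_range_permExt_pairs (fun i j => u (z i) (z j)) hk2,
      sum_offDiag_eq_two_nsmul_sum_lt _ (fun i j => u (z i) (z j)) fun _ _ => hsymm _ _,
      ← hchoose]
    simp only [nsmul_eq_mul, Nat.cast_ofNat]
    field_simp
  · intro i j hi hj hij
    rw [card_filter, sum_product,
      sum_perm_sum_range_permExt_pairs (fun x y => if ({x, y} : Finset ℕ) = {i, j} then 1 else 0)
        hk2, ← card_filter,
      card_offDiag_filter_pair_eq_two (mem_range.2 hi) (mem_range.2 hj) hij, smul_eq_mul,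
      smul_eq_mul]
    ring
end

section
/- Let θ, θ̃ ∈ (0,1) with θ̃ < θ, and let Δ₁, Δ₂ be real numbers with Δ₁² + Δ₂² > 0. Then θ(1−θ)(Δ₁² + Δ₂²) > (θ̃(1−θ)²/(1−θ̃)) · [Δ₁² + ( ((θ−θ̃)/(1−θ̃))·(−Δ₁) + ((1−θ)/(1−θ̃))·Δ₂ )²]. -/
lemma key (t s b d1 d2 : ℝ) (ht : 0 < t) (hs : 0 < s) (hb : 0 < b)
    (hd : 0 < d1 ^ 2 + d2 ^ 2) :
    t * b * ((b + s) ^ 2 * d1 ^ 2 + (s * (-d1) + b * d2) ^ 2)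
      < (t + s) * (d1 ^ 2 + d2 ^ 2) * (b + s) ^ 3 := by
  have hA : 0 < s*b^3 + 3*s^2*b^2 + 3*s^3*b + s^4 + t*s*b^2 + t*s^2*b + t*s^3 := by positivity
  have hC : 0 < s*b^3 + 3*s^2*b^2 + 3*s^3*b + s^4 + 3*t*s*b^2 + 3*t*s^2*b + t*s^3 := by
    positivity
  have hdisc : 0 < (4*s^2*b^6 + 24*s^3*b^5 + 60*s^4*b^4 + 80*s^5*b^3 + 60*s^6*b^2
      + 24*s^7*b + 4*s^8 + 16*t*s^2*b^5 + 64*t*s^3*b^4 + 104*t*s^4*b^3 + 88*t*s^5*b^2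
      + 40*t*s^6*b + 8*t*s^7 + 8*t^2*s^2*b^4 + 24*t^2*s^3*b^3 + 28*t^2*s^4*b^2
      + 16*t^2*s^5*b + 4*t^2*s^6) * (d1^2 + d2^2) := by positivity
  nlinarith [sq_nonneg (2*(s*b^3 + 3*s^2*b^2 + 3*s^3*b + s^4 + 3*t*s*b^2 + 3*t*s^2*b + t*s^3)*d2
      + 2*t*s*b^2*d1),
    sq_nonneg (2*(s*b^3 + 3*s^2*b^2 + 3*s^3*b + s^4 + t*s*b^2 + t*s^2*b + t*s^3)*d1
      + 2*t*s*b^2*d2),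
    hdisc, hA, hC, mul_pos hb hA, mul_pos hb hC]

/-- Key algebraic inequality showing the population limit function of the
weighted scan statistic is uniquely maximized at the true change fraction.
For `θ, θ̃ ∈ (0,1)` with `θ̃ < θ` and `Δ₁² + Δ₂² > 0`,
`θ(1−θ)(Δ₁² + Δ₂²) > (θ̃(1−θ)²/(1−θ̃)) · [Δ₁² + (((θ−θ̃)/(1−θ̃))·(−Δ₁) + ((1−θ)/(1−θ̃))·Δ₂)²]`. -/
theorem statement18 (θ θt Δ₁ Δ₂ : ℝ)
    (hθ : θ ∈ Set.Ioo (0 : ℝ) 1) (hθt : θt ∈ Set.Ioo (0 : ℝ) 1)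
    (hlt : θt < θ) (hΔ : 0 < Δ₁ ^ 2 + Δ₂ ^ 2) :
    (θt * (1 - θ) ^ 2 / (1 - θt)) *
        (Δ₁ ^ 2 + ((θ - θt) / (1 - θt) * (-Δ₁) + (1 - θ) / (1 - θt) * Δ₂) ^ 2)
      < θ * (1 - θ) * (Δ₁ ^ 2 + Δ₂ ^ 2) := by
  obtain ⟨h1, h2⟩ := hθ
  obtain ⟨h3, h4⟩ := hθt
  have ht : (0:ℝ) < 1 - θt := by linarith
  have ht' : (1:ℝ) - θt ≠ 0 := ne_of_gt ht
  rw [div_mul_eq_mul_div, div_lt_iff₀ ht]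
  have heq : (θ - θt) / (1 - θt) * (-Δ₁) + (1 - θ) / (1 - θt) * Δ₂
      = ((θ - θt) * (-Δ₁) + (1 - θ) * Δ₂) / (1 - θt) := by ring
  rw [heq, div_pow,
    show θt * (1 - θ) ^ 2 * (Δ₁ ^ 2 + ((θ - θt) * -Δ₁ + (1 - θ) * Δ₂) ^ 2 / (1 - θt) ^ 2)
      = θt * (1 - θ) ^ 2 * (Δ₁ ^ 2 * (1 - θt) ^ 2 + ((θ - θt) * -Δ₁ + (1 - θ) * Δ₂) ^ 2)
        / (1 - θt) ^ 2 from by field_simp,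
    div_lt_iff₀ (by positivity : (0:ℝ) < (1 - θt) ^ 2)]
  have hkey := key θt (θ - θt) (1 - θ) Δ₁ Δ₂ h3 (by linarith) (by linarith) hΔ
  have hb : 0 < 1 - θ := by linarith
  nlinarith [mul_lt_mul_of_pos_left hkey hb]
end
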